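/- Let g be a 6-dimensional real Lie algebra with basis e_1,...,e_6 and dual basis e^1,...,e^6, such that every differential de^j (j=1,...,6) lies in e^1 ∧ (g*⊗ℂ), i.e. the image of d on 1-forms is contained in e^1 ∧ A^1. Then every almost complex structure J on g satisfies rk N_J ≤ 2. In particular, the Lie algebras (0,0,0,12,13,14), (0,0,0,12,14,15), and (0,0,12,13,14,15) admit no maximally non-integrable almost complex structure. -/
import Mathlib


open Matrix

noncomputable section

/-- Complexification of a real matrix. -/
def cplx {n : ℕ} (A : Matrix (Fin n) (Fin n) ℝ) : Matrix (Fin n) (Fin n) ℂ :=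
  A.map Complex.ofReal

/-- The projector `(1/2)(Id + iJ)` of `V ⊗ ℂ` onto the `-i`-eigenspace `V^{0,1}` of the
complexified almost complex structure `J`. -/
def P01 {n : ℕ} (J : Matrix (Fin n) (Fin n) ℝ) : Matrix (Fin n) (Fin n) ℂ :=
  (2⁻¹ : ℂ) • (1 + Complex.I • cplx J)

/-- The `(0,2)`-part of a complex 2-form `ω` (written as an antisymmetric matrix in the
real basis) with respect to the bigrading induced by `J`: `ω^{0,2}(x,y) = ω(P01 x, P01 y)`. -/
def proj02 {n : ℕ} (J : Matrix (Fin n) (Fin n) ℝ) (ω : Matrix (Fin n) (Fin n) ℂ) :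
    Matrix (Fin n) (Fin n) ℂ :=
  (P01 J)ᵀ * ω * P01 J

/-- The Chevalley–Eilenberg differential on complex 1-forms, determined by its values
`Dd r = d e^r` on the dual basis: `d(Σ α_r e^r) = Σ α_r · (d e^r)`. -/
def dC {n : ℕ} (Dd : Fin n → Matrix (Fin n) (Fin n) ℝ) (α : Fin n → ℂ) :
    Matrix (Fin n) (Fin n) ℂ :=
  ∑ r, α r • cplx (Dd r)

/-- The Chevalley–Eilenberg differential on real 1-forms, as a linear map. -/
def dR {n : ℕ} (Dd : Fin n → Matrix (Fin n) (Fin n) ℝ) :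
    (Fin n → ℝ) →ₗ[ℝ] Matrix (Fin n) (Fin n) ℝ :=
  ∑ r, (LinearMap.proj r : (Fin n → ℝ) →ₗ[ℝ] ℝ).smulRight (Dd r)

/-- The rank of the Nijenhuis tensor of the almost complex structure `J`: the complex
dimension of the image of `μ̄ = π^{0,2} ∘ d` on `(1,0)`-forms.  A complex covector `α` is
of type `(1,0)` iff it annihilates `V^{0,1}`, i.e. `α ∘ P01 = 0`. -/
def nijRank {n : ℕ} (Dd : Fin n → Matrix (Fin n) (Fin n) ℝ)
    (J : Matrix (Fin n) (Fin n) ℝ) : ℕ :=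
  Module.finrank ℂ (Submodule.span ℂ
    {ω : Matrix (Fin n) (Fin n) ℂ |
      ∃ α : Fin n → ℂ, Matrix.vecMul α (P01 J) = 0 ∧ ω = proj02 J (dC Dd α)})

/-- The 2-form `e^a ∧ e^b`, as an antisymmetric matrix. -/
def wR (a b : Fin 6) : Matrix (Fin 6) (Fin 6) ℝ :=
  fun p q => (if p = a ∧ q = b then 1 else 0) - (if p = b ∧ q = a then 1 else 0)

/-- The wedge product of two complex covectors, as an antisymmetric matrix. -/
def wedgeC {n : ℕ} (α β : Fin n → ℂ) : Matrix (Fin n) (Fin n) ℂ :=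
  fun p q => α p * β q - α q * β p

/-! ### Auxiliary lemmas -/

lemma cplx_mul {n : ℕ} (A B : Matrix (Fin n) (Fin n) ℝ) : cplx (A * B) = cplx A * cplx B :=
  Matrix.map_mul (f := Complex.ofRealHom)

lemma cplx_sq {n : ℕ} (J : Matrix (Fin n) (Fin n) ℝ) (hJ : J * J = -1) :
    cplx J * cplx J = -1 := by
  rw [← cplx_mul, hJ]
  ext p q
  simp [cplx, Matrix.one_apply, apply_ite]

lemma P01_idem {n : ℕ} (J : Matrix (Fin n) (Fin n) ℝ) (hJ : J * J = -1) :
    P01 J * P01 J = P01 J := by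
  have h := cplx_sq J hJ
  rw [P01, Matrix.smul_mul, Matrix.mul_smul, smul_smul]
  rw [add_mul, mul_add, mul_add, Matrix.smul_mul, Matrix.mul_smul,
    smul_mul_smul_comm, Complex.I_mul_I, h]
  norm_num
  module

/-- The complementary projector `(1/2)(Id - iJ)`. -/
def Qm {n : ℕ} (J : Matrix (Fin n) (Fin n) ℝ) : Matrix (Fin n) (Fin n) ℂ :=
  (2⁻¹ : ℂ) • (1 - Complex.I • cplx J)

lemma P01_mul_Qm {n : ℕ} (J : Matrix (Fin n) (Fin n) ℝ) (hJ : J * J = -1) :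
    P01 J * Qm J = 0 := by
  have h := cplx_sq J hJ
  rw [P01, Qm, Matrix.smul_mul, Matrix.mul_smul, smul_smul]
  rw [add_mul, mul_sub, mul_sub, Matrix.smul_mul, Matrix.mul_smul,
    smul_mul_smul_comm, Complex.I_mul_I, h]
  norm_num

lemma Qm_eq {n : ℕ} (J : Matrix (Fin n) (Fin n) ℝ) : Qm J = ((P01 J)ᴴ)ᵀ := by
  ext p q
  simp only [Qm, P01, cplx, Matrix.conjTranspose_apply, Matrix.transpose_apply,
    Matrix.smul_apply, Matrix.add_apply, Matrix.sub_apply,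
    Matrix.map_apply, smul_eq_mul, star_mul', star_add, Complex.conj_ofReal]
  rw [Matrix.one_apply]
  simp only [apply_ite (star : ℂ → ℂ), Complex.star_def, Complex.conj_I, map_inv₀,
    map_ofNat, _root_.map_one, map_zero, Complex.conj_ofReal]
  ring

lemma rank_Qm {n : ℕ} (J : Matrix (Fin n) (Fin n) ℝ) : (Qm J).rank = (P01 J).rank := by
  open scoped ComplexOrder in
  rw [Qm_eq, Matrix.rank_transpose, Matrix.rank_conjTranspose]

lemma rank_P01_le (J : Matrix (Fin 6) (Fin 6) ℝ) (hJ : J * J = -1) :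
    (P01 J).rank ≤ 3 := by
  have hPQ : P01 J * Qm J = 0 := P01_mul_Qm J hJ
  have hPP : P01 J * P01 J = P01 J := P01_idem J hJ
  have hdisj : LinearMap.range (P01 J).mulVecLin ⊓ LinearMap.range (Qm J).mulVecLin = ⊥ := by
    rw [eq_bot_iff]
    rintro x ⟨⟨u, hu⟩, ⟨v, hv⟩⟩
    have h1 : (P01 J).mulVec x = x := by
      rw [← hu, Matrix.mulVecLin_apply, Matrix.mulVec_mulVec, hPP, ← Matrix.mulVecLin_apply, hu]
    have h2 : (P01 J).mulVec x = 0 := by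
      rw [← hv, Matrix.mulVecLin_apply, Matrix.mulVec_mulVec, hPQ, Matrix.zero_mulVec]
    exact (Submodule.mem_bot ℂ).mpr (h1.symm.trans h2)
  have key := Submodule.finrank_sup_add_finrank_inf_eq
    (LinearMap.range (P01 J).mulVecLin) (LinearMap.range (Qm J).mulVecLin)
  rw [hdisj, finrank_bot] at key
  have hle : Module.finrank ℂ
      ↥(LinearMap.range (P01 J).mulVecLin ⊔ LinearMap.range (Qm J).mulVecLin) ≤ 6 := by
    have := Submodule.finrank_le
      (LinearMap.range (P01 J).mulVecLin ⊔ LinearMap.range (Qm J).mulVecLin)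
    simpa [Module.finrank_fintype_fun_eq_card] using this
  have hQ := rank_Qm J
  unfold Matrix.rank at *
  omega

/-- The covector `e^1` (index `0`). -/
def e0 : Fin 6 → ℂ := fun p => if p = 0 then 1 else 0

lemma proj_wedge (P : Matrix (Fin 6) (Fin 6) ℂ) (a b : Fin 6 → ℂ) :
    Pᵀ * wedgeC a b * P = wedgeC (vecMul a P) (vecMul b P) := by
  ext p q
  simp only [wedgeC, Matrix.mul_apply, Matrix.vecMul, dotProduct,
    Matrix.transpose_apply, Fin.sum_univ_six]
  ring

/-- The linear map `δ ↦ γ ∧ (δ P)`. -/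
def wedgeMap (γ : Fin 6 → ℂ) (P : Matrix (Fin 6) (Fin 6) ℂ) :
    (Fin 6 → ℂ) →ₗ[ℂ] Matrix (Fin 6) (Fin 6) ℂ where
  toFun δ := wedgeC γ (vecMul δ P)
  map_add' x y := by ext p q; simp [wedgeC, Matrix.add_vecMul]; ring
  map_smul' c x := by ext p q; simp [wedgeC, Matrix.smul_vecMul]; ring

lemma gamma_ne (J : Matrix (Fin 6) (Fin 6) ℝ) : vecMul e0 (P01 J) ≠ 0 := by
  intro h
  have h0 := congrFun h 0
  simp [Matrix.vecMul, dotProduct, Fin.sum_univ_six, e0, P01, cplx,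
    Matrix.one_apply, Complex.ext_iff] at h0

/-- The main bound: if the image of `d` is contained in `e^1 ∧ A^1`, then
`rk N_J ≤ 2` for every almost complex structure `J`. -/
lemma main_le (Dd : Fin 6 → Matrix (Fin 6) (Fin 6) ℝ)
    (h3 : ∀ α : Fin 6 → ℂ, ∃ β : Fin 6 → ℂ,
      dC Dd α = wedgeC (fun p => if p = 0 then (1 : ℂ) else 0) β)
    (J : Matrix (Fin 6) (Fin 6) ℝ) (hJ : J * J = -1) :
    nijRank Dd J ≤ 2 := by
  rw [nijRank]
  set P := P01 J with hP
  set γ := vecMul e0 P with hγ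
  set L := wedgeMap γ P with hL
  have hspan : Submodule.span ℂ
      {ω : Matrix (Fin 6) (Fin 6) ℂ |
        ∃ α : Fin 6 → ℂ, Matrix.vecMul α (P01 J) = 0 ∧ ω = proj02 J (dC Dd α)}
      ≤ LinearMap.range L := by
    rw [Submodule.span_le]
    rintro ω ⟨α, hα, rfl⟩
    obtain ⟨β, hβ⟩ := h3 α
    refine ⟨β, ?_⟩
    show wedgeC γ (vecMul β P) = _
    have he : (fun p => if p = 0 then (1 : ℂ) else 0) = e0 := rfl
    rw [proj02, hβ, he, proj_wedge]
  set K := LinearMap.ker (Pᵀ.mulVecLin) with hK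
  have hvm : ∀ δ : Fin 6 → ℂ, vecMul δ P = Pᵀ.mulVec δ := by
    intro δ; rw [← Matrix.transpose_transpose P, Matrix.vecMul_transpose,
      Matrix.transpose_transpose]
  have hsub : K ⊔ Submodule.span ℂ {e0} ≤ LinearMap.ker L := by
    apply sup_le
    · intro δ hδ
      have : vecMul δ P = 0 := by rw [hvm]; exact hδ
      show wedgeC γ (vecMul δ P) = 0
      rw [this]; ext p q; simp [wedgeC]
    · rw [Submodule.span_singleton_le_iff_mem]
      show wedgeC γ (vecMul e0 P) = 0
      rw [← hγ]; ext p q; simp [wedgeC]; ring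
  have hγne : γ ≠ 0 := gamma_ne J
  have he0 : e0 ≠ 0 := by
    intro h; have := congrFun h 0; simp [e0] at this
  have hinf : K ⊓ Submodule.span ℂ {e0} = ⊥ := by
    rw [eq_bot_iff]
    rintro x ⟨hx1, hx2⟩
    obtain ⟨c, rfl⟩ := Submodule.mem_span_singleton.mp hx2
    have : Pᵀ.mulVec (c • e0) = 0 := hx1
    rw [Matrix.mulVec_smul] at this
    have hcγ : c • γ = 0 := by rw [hγ, hvm]; exact this
    rcases smul_eq_zero.mp hcγ with hc | h0
    · simp [hc, Submodule.mem_bot]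
    · exact absurd h0 hγne
  have hkey := Submodule.finrank_sup_add_finrank_inf_eq K (Submodule.span ℂ {e0})
  rw [hinf, finrank_bot, finrank_span_singleton he0] at hkey
  have hrn1 := LinearMap.finrank_range_add_finrank_ker (Pᵀ.mulVecLin)
  have hrankP : Module.finrank ℂ ↥(LinearMap.range Pᵀ.mulVecLin) ≤ 3 := by
    have h1 : Pᵀ.rank = P.rank := Matrix.rank_transpose P
    have h2 : P.rank ≤ 3 := rank_P01_le J hJ
    unfold Matrix.rank at h1 h2
    omega
  rw [Module.finrank_fintype_fun_eq_card] at hrn1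
  simp only [Fintype.card_fin] at hrn1
  rw [← hK] at hrn1
  have hKge : 3 ≤ Module.finrank ℂ ↥K := by omega
  have hkerL : 4 ≤ Module.finrank ℂ ↥(LinearMap.ker L) := by
    have := Submodule.finrank_mono hsub
    omega
  have hrn2 := LinearMap.finrank_range_add_finrank_ker L
  rw [Module.finrank_fintype_fun_eq_card] at hrn2
  simp only [Fintype.card_fin] at hrn2
  have hfin : Module.finrank ℂ ↥(LinearMap.range L) ≤ 2 := by omega
  calc Module.finrank ℂ _ ≤ Module.finrank ℂ ↥(LinearMap.range L) :=
        Submodule.finrank_mono hspan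
    _ ≤ 2 := hfin

set_option maxHeartbeats 1000000 in
/-- Let `g` be a `6`-dimensional real Lie algebra such that the image of `d` on 1-forms
is contained in `e^1 ∧ A^1`.  Then every almost complex structure `J` on `g` satisfies
`rk N_J ≤ 2`.  In particular, the Lie algebras `(0,0,0,12,13,14)`, `(0,0,0,12,14,15)`
and `(0,0,12,13,14,15)` admit no maximally non-integrable almost complex structure. -/
theorem nijRank_le_two_of_image_in_e1 :
    (∀ Dd : Fin 6 → Matrix (Fin 6) (Fin 6) ℝ,
      (∀ r, (Dd r)ᵀ = -(Dd r)) →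
      (∀ p q r s, ∑ t, ((Dd t) p q * (Dd s) t r + (Dd t) q r * (Dd s) t p +
        (Dd t) r p * (Dd s) t q) = 0) →
      (∀ α : Fin 6 → ℂ, ∃ β : Fin 6 → ℂ,
        dC Dd α = wedgeC (fun p => if p = 0 then (1 : ℂ) else 0) β) →
      ∀ J : Matrix (Fin 6) (Fin 6) ℝ, J * J = -1 → nijRank Dd J ≤ 2) ∧
    (∀ Dd : Fin 6 → Matrix (Fin 6) (Fin 6) ℝ,
      (Dd = ![0, 0, 0, wR 0 1, wR 0 2, wR 0 3] ∨
       Dd = ![0, 0, 0, wR 0 1, wR 0 3, wR 0 4] ∨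
       Dd = ![0, 0, wR 0 1, wR 0 2, wR 0 3, wR 0 4]) →
      ¬ ∃ J : Matrix (Fin 6) (Fin 6) ℝ, J * J = -1 ∧ nijRank Dd J = 3) := by
  constructor
  · intro Dd _ _ h3 J hJ
    exact main_le Dd h3 J hJ
  · rintro Dd (rfl | rfl | rfl) ⟨J, hJ, hr⟩
    · have h3 : ∀ α : Fin 6 → ℂ, ∃ β : Fin 6 → ℂ,
          dC ![0, 0, 0, wR 0 1, wR 0 2, wR 0 3] α =
            wedgeC (fun p => if p = 0 then (1 : ℂ) else 0) β := by
        intro α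
        refine ⟨![0, α 3, α 4, α 5, 0, 0], ?_⟩
        have h0 : (![0, 0, 0, wR 0 1, wR 0 2, wR 0 3] : Fin 6 → Matrix (Fin 6) (Fin 6) ℝ) 0 = 0 := rfl
        have h1 : (![0, 0, 0, wR 0 1, wR 0 2, wR 0 3] : Fin 6 → Matrix (Fin 6) (Fin 6) ℝ) 1 = 0 := rfl
        have h2 : (![0, 0, 0, wR 0 1, wR 0 2, wR 0 3] : Fin 6 → Matrix (Fin 6) (Fin 6) ℝ) 2 = 0 := rfl
        have h3 : (![0, 0, 0, wR 0 1, wR 0 2, wR 0 3] : Fin 6 → Matrix (Fin 6) (Fin 6) ℝ) 3 = wR 0 1 := rfl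
        have h4 : (![0, 0, 0, wR 0 1, wR 0 2, wR 0 3] : Fin 6 → Matrix (Fin 6) (Fin 6) ℝ) 4 = wR 0 2 := rfl
        have h5 : (![0, 0, 0, wR 0 1, wR 0 2, wR 0 3] : Fin 6 → Matrix (Fin 6) (Fin 6) ℝ) 5 = wR 0 3 := rfl
        have hb : (![0, α 3, α 4, α 5, 0, 0] : Fin 6 → ℂ) 5 = 0 := rfl
        ext p q
        fin_cases p <;> fin_cases q <;>
          simp [dC, cplx, wR, wedgeC, Fin.sum_univ_six, h0, h1, h2, h3, h4, h5, hb]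
      have := main_le _ h3 J hJ
      omega
    · have h3 : ∀ α : Fin 6 → ℂ, ∃ β : Fin 6 → ℂ,
          dC ![0, 0, 0, wR 0 1, wR 0 3, wR 0 4] α =
            wedgeC (fun p => if p = 0 then (1 : ℂ) else 0) β := by
        intro α
        refine ⟨![0, α 3, 0, α 4, α 5, 0], ?_⟩
        have h0 : (![0, 0, 0, wR 0 1, wR 0 3, wR 0 4] : Fin 6 → Matrix (Fin 6) (Fin 6) ℝ) 0 = 0 := rfl
        have h1 : (![0, 0, 0, wR 0 1, wR 0 3, wR 0 4] : Fin 6 → Matrix (Fin 6) (Fin 6) ℝ) 1 = 0 := rfl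
        have h2 : (![0, 0, 0, wR 0 1, wR 0 3, wR 0 4] : Fin 6 → Matrix (Fin 6) (Fin 6) ℝ) 2 = 0 := rfl
        have h3 : (![0, 0, 0, wR 0 1, wR 0 3, wR 0 4] : Fin 6 → Matrix (Fin 6) (Fin 6) ℝ) 3 = wR 0 1 := rfl
        have h4 : (![0, 0, 0, wR 0 1, wR 0 3, wR 0 4] : Fin 6 → Matrix (Fin 6) (Fin 6) ℝ) 4 = wR 0 3 := rfl
        have h5 : (![0, 0, 0, wR 0 1, wR 0 3, wR 0 4] : Fin 6 → Matrix (Fin 6) (Fin 6) ℝ) 5 = wR 0 4 := rfl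
        have hb : (![0, α 3, 0, α 4, α 5, 0] : Fin 6 → ℂ) 5 = 0 := rfl
        ext p q
        fin_cases p <;> fin_cases q <;>
          simp [dC, cplx, wR, wedgeC, Fin.sum_univ_six, h0, h1, h2, h3, h4, h5, hb]
      have := main_le _ h3 J hJ
      omega
    · have h3 : ∀ α : Fin 6 → ℂ, ∃ β : Fin 6 → ℂ,
          dC ![0, 0, wR 0 1, wR 0 2, wR 0 3, wR 0 4] α =
            wedgeC (fun p => if p = 0 then (1 : ℂ) else 0) β := by
        intro α
        refine ⟨![0, α 2, α 3, α 4, α 5, 0], ?_⟩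
        have h0 : (![0, 0, wR 0 1, wR 0 2, wR 0 3, wR 0 4] : Fin 6 → Matrix (Fin 6) (Fin 6) ℝ) 0 = 0 := rfl
        have h1 : (![0, 0, wR 0 1, wR 0 2, wR 0 3, wR 0 4] : Fin 6 → Matrix (Fin 6) (Fin 6) ℝ) 1 = 0 := rfl
        have h2 : (![0, 0, wR 0 1, wR 0 2, wR 0 3, wR 0 4] : Fin 6 → Matrix (Fin 6) (Fin 6) ℝ) 2 = wR 0 1 := rfl
        have h3 : (![0, 0, wR 0 1, wR 0 2, wR 0 3, wR 0 4] : Fin 6 → Matrix (Fin 6) (Fin 6) ℝ) 3 = wR 0 2 := rfl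
        have h4 : (![0, 0, wR 0 1, wR 0 2, wR 0 3, wR 0 4] : Fin 6 → Matrix (Fin 6) (Fin 6) ℝ) 4 = wR 0 3 := rfl
        have h5 : (![0, 0, wR 0 1, wR 0 2, wR 0 3, wR 0 4] : Fin 6 → Matrix (Fin 6) (Fin 6) ℝ) 5 = wR 0 4 := rfl
        have hb : (![0, α 2, α 3, α 4, α 5, 0] : Fin 6 → ℂ) 5 = 0 := rfl
        ext p q
        fin_cases p <;> fin_cases q <;>
          simp [dC, cplx, wR, wedgeC, Fin.sum_univ_six, h0, h1, h2, h3, h4, h5, hb]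
      have := main_le _ h3 J hJ
      omega
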